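/- If x, y ∈ ℝ^n are linearly independent and z ∈ ℝ^m is nonzero, then the tensor C2(x,y,z) = (1/2)(x∘y∘z − y∘x∘z) has tensor rank exactly 2. -/

import Mathlib

noncomputable def C2 {n m : ℕ} (x y : Fin n → ℝ) (z : Fin m → ℝ) :
    Fin n → Fin n → Fin m → ℝ :=
  fun i j k => (1/2 : ℝ) * (x i * y j * z k - y i * x j * z k)

/-- The tensor rank of an order-3 tensor: a set of achievable numbers of rank-one summands. -/
def rankOneSums {n₁ n₂ n₃ : ℕ} (T : Fin n₁ → Fin n₂ → Fin n₃ → ℝ) : Set ℕ :=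
  {r | ∃ (u : Fin r → Fin n₁ → ℝ) (v : Fin r → Fin n₂ → ℝ) (w : Fin r → Fin n₃ → ℝ),
    ∀ i j k, T i j k = ∑ t, u t i * v t j * w t k}

/-!
`C2 x y z` is antisymmetric in its first two slots, and a rank-one tensor `T = u ∘ v ∘ w` satisfies
`T i j k * T j i k = T i i k * T j j k`. For an antisymmetric `T` the right side vanishes and the
left side is `-(T i j k)²`, so a nonzero antisymmetric tensor has rank at least two. It is nonzero
here because a nonzero `2 × 2` minor of `x, y` times a nonzero entry of `z` is an entry of `2 • C2`,
and `x ∘ y ∘ (z/2) + y ∘ x ∘ (-z/2)` is an explicit decomposition of length two.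
-/

lemma exists_minor_ne_zero_of_linearIndependent {K ι : Type*} [Field K] {x y : ι → K}
    (h : LinearIndependent K ![x, y]) : ∃ i j, x i * y j - y i * x j ≠ 0 := by
  by_contra! hminor
  have hx : x ≠ 0 := by simpa using h.ne_zero 0
  refine hx (funext fun j => ?_)
  have hdep : y j • x + (-x j) • y = 0 := by
    funext i
    simp only [Pi.add_apply, Pi.smul_apply, smul_eq_mul, Pi.zero_apply]
    linear_combination hminor i j
  exact ((LinearIndependent.pair_iff.mp h) _ _ hdep).2 |> neg_eq_zero.mp

lemma eq_zero_of_zero_mem_rankOneSums {n₁ n₂ n₃ : ℕ} {T : Fin n₁ → Fin n₂ → Fin n₃ → ℝ}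
    (hT : 0 ∈ rankOneSums T) : T = 0 := by
  obtain ⟨u, v, w, hsum⟩ := hT
  funext i j k
  simpa using hsum i j k

lemma eq_zero_of_one_mem_rankOneSums_of_antisymm {n m : ℕ} {T : Fin n → Fin n → Fin m → ℝ}
    (hanti : ∀ i j k, T j i k = -T i j k) (hT : 1 ∈ rankOneSums T) : T = 0 := by
  obtain ⟨u, v, w, hsum⟩ := hT
  simp only [Fin.sum_univ_one] at hsum
  have hdiag : ∀ i k, T i i k = 0 := fun i k => by linarith [hanti i i k]
  have hrankOne : ∀ i j k, T i j k * T j i k = T i i k * T j j k := fun i j k => by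
    simp only [hsum]; ring
  funext i j k
  have hsq : T i j k * T i j k = 0 := by
    linear_combination -hrankOne i j k + T i j k * hanti i j k - T j j k * hdiag i k
  exact mul_self_eq_zero.mp hsq

lemma two_le_of_mem_rankOneSums_of_antisymm {n m : ℕ} {T : Fin n → Fin n → Fin m → ℝ}
    (hanti : ∀ i j k, T j i k = -T i j k) (hT : T ≠ 0) {r : ℕ} (hr : r ∈ rankOneSums T) :
    2 ≤ r := by
  by_contra! hlt
  interval_cases r
  · exact hT (eq_zero_of_zero_mem_rankOneSums hr)
  · exact hT (eq_zero_of_one_mem_rankOneSums_of_antisymm hanti hr)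

lemma C2_swap {n m : ℕ} (x y : Fin n → ℝ) (z : Fin m → ℝ) (i j : Fin n) (k : Fin m) :
    C2 x y z j i k = -C2 x y z i j k := by
  simp only [C2]; ring

lemma C2_ne_zero {n m : ℕ} {x y : Fin n → ℝ} {z : Fin m → ℝ}
    (h : LinearIndependent ℝ ![x, y]) (hz : z ≠ 0) : C2 x y z ≠ 0 := by
  obtain ⟨i, j, hminor⟩ := exists_minor_ne_zero_of_linearIndependent h
  obtain ⟨k, hk⟩ := Function.ne_iff.mp hz
  have hentry : C2 x y z i j k = 1 / 2 * (x i * y j - y i * x j) * z k := by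
    simp only [C2]; ring
  have hne : C2 x y z i j k ≠ 0 := by
    rw [hentry]
    exact mul_ne_zero (mul_ne_zero (by norm_num) hminor) hk
  exact fun h0 => hne (by simp [h0])

lemma two_mem_rankOneSums_C2 {n m : ℕ} (x y : Fin n → ℝ) (z : Fin m → ℝ) :
    2 ∈ rankOneSums (C2 x y z) := by
  refine ⟨![x, y], ![y, x], ![(1 / 2 : ℝ) • z, -((1 / 2 : ℝ) • z)], fun i j k => ?_⟩
  simp only [C2, Matrix.cons_val', Matrix.cons_val_fin_one, Pi.smul_apply, smul_eq_mul,
    Pi.neg_apply, Fin.sum_univ_two, Matrix.cons_val_zero, Matrix.cons_val_one]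
  ring

theorem C2_rank_two {n m : ℕ} (x y : Fin n → ℝ) (z : Fin m → ℝ)
    (h : LinearIndependent ℝ ![x, y]) (hz : z ≠ 0) :
    IsLeast (rankOneSums (C2 x y z)) 2 :=
  ⟨two_mem_rankOneSums_C2 x y z,
    fun _ hr => two_le_of_mem_rankOneSums_of_antisymm (C2_swap x y z) (C2_ne_zero h hz) hr⟩
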